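/- arXiv:2409.06418 — 6 statements merged into one kernel-verified Lean document; each statement's English description precedes it below -/
import Mathlib

section
/- Let H = (V₁ ⊔ V₂, E) be a finite bipartite graph with |V₁| = |V₂| = m. Suppose that (i) every subset S ⊆ V₁ with |S| ≤ (m+1)/2 satisfies |Γ(S) ∩ V₂| ≥ |S|, and (ii) every subset S ⊆ V₂ with |S| ≤ (m+1)/2 satisfies |Γ(S) ∩ V₁| ≥ |S|. Then Hall's condition holds for all subsets: for every S ⊆ V₁, |Γ(S) ∩ V₂| ≥ |S|, and for every S ⊆ V₂, |Γ(S) ∩ V₁| ≥ |S|. -/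
theorem hall_aux
    {V₁ V₂ : Type*} [Fintype V₁] [Fintype V₂] [DecidableEq V₁] [DecidableEq V₂]
    (r : V₁ → V₂ → Prop) [∀ a b, Decidable (r a b)] (m : ℕ)
    (h1 : Fintype.card V₁ = m) (h2 : Fintype.card V₂ = m)
    (hA : ∀ S : Finset V₁, 2 * S.card ≤ m + 1 →
      S.card ≤ (Finset.univ.filter (fun b => ∃ a ∈ S, r a b)).card)
    (hB : ∀ S : Finset V₂, 2 * S.card ≤ m + 1 →
      S.card ≤ (Finset.univ.filter (fun a => ∃ b ∈ S, r a b)).card) :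
    ∀ S : Finset V₁, S.card ≤ (Finset.univ.filter (fun b => ∃ a ∈ S, r a b)).card := by
  intro S
  by_cases h : 2 * S.card ≤ m + 1
  · exact hA S h
  · push_neg at h
    -- S is large; pick S' ⊆ S of size (m+1)/2
    have hS' : (m + 1) / 2 ≤ S.card := by omega
    obtain ⟨S', hsub, hcard⟩ := Finset.exists_subset_card_eq hS'
    have hmono : (Finset.univ.filter (fun b => ∃ a ∈ S', r a b)) ⊆
        (Finset.univ.filter (fun b => ∃ a ∈ S, r a b)) := by
      intro b hb
      simp only [Finset.mem_filter, Finset.mem_univ, true_and] at hb ⊢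
      obtain ⟨a, ha, hr⟩ := hb
      exact ⟨a, hsub ha, hr⟩
    have hΓbig : (m + 1) / 2 ≤ (Finset.univ.filter (fun b => ∃ a ∈ S, r a b)).card := by
      calc (m + 1) / 2 = S'.card := hcard.symm
        _ ≤ (Finset.univ.filter (fun b => ∃ a ∈ S', r a b)).card := hA S' (by omega)
        _ ≤ _ := Finset.card_le_card hmono
    have hTcard : (Finset.univ.filter (fun b => ∃ a ∈ S, r a b)).card
        + (Finset.univ.filter (fun b => ¬ ∃ a ∈ S, r a b)).card = m := by
      have := Finset.card_filter_add_card_filter_not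
        (s := (Finset.univ : Finset V₂)) (p := fun b => ∃ a ∈ S, r a b)
      rwa [Finset.card_univ, h2] at this
    set T := Finset.univ.filter (fun b => ¬ ∃ a ∈ S, r a b) with hT
    have hTsmall : 2 * T.card ≤ m + 1 := by omega
    have hBT := hB T hTsmall
    have hΓT : (Finset.univ.filter (fun a => ∃ b ∈ T, r a b)) ⊆
        (Finset.univ.filter (fun a => a ∉ S)) := by
      intro a ha
      simp only [Finset.mem_filter, Finset.mem_univ, true_and] at ha ⊢
      obtain ⟨b, hb, hr⟩ := ha
      intro haS
      rw [hT] at hb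
      simp only [Finset.mem_filter, Finset.mem_univ, true_and] at hb
      exact hb ⟨a, haS, hr⟩
    have hcompl : (Finset.univ.filter (fun a => a ∉ S)).card = m - S.card := by
      have := Finset.card_filter_add_card_filter_not
        (s := (Finset.univ : Finset V₁)) (p := fun a => a ∈ S)
      simp only [Finset.filter_mem_eq_inter, Finset.univ_inter] at this
      rw [Finset.card_univ, h1] at this
      omega
    have hSle : S.card ≤ m := by
      calc S.card ≤ Fintype.card V₁ := Finset.card_le_univ _
        _ = m := h1
    have : T.card ≤ m - S.card := by
      calc T.card ≤ (Finset.univ.filter (fun a => ∃ b ∈ T, r a b)).card := hBT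
        _ ≤ (Finset.univ.filter (fun a => a ∉ S)).card := Finset.card_le_card hΓT
        _ = m - S.card := hcompl
    omega

theorem hall_condition_reduction
    {V₁ V₂ : Type*} [Fintype V₁] [Fintype V₂] [DecidableEq V₁] [DecidableEq V₂]
    (r : V₁ → V₂ → Prop) [∀ a b, Decidable (r a b)] (m : ℕ)
    (h1 : Fintype.card V₁ = m) (h2 : Fintype.card V₂ = m)
    (hA : ∀ S : Finset V₁, 2 * S.card ≤ m + 1 →
      S.card ≤ (Finset.univ.filter (fun b => ∃ a ∈ S, r a b)).card)
    (hB : ∀ S : Finset V₂, 2 * S.card ≤ m + 1 →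
      S.card ≤ (Finset.univ.filter (fun a => ∃ b ∈ S, r a b)).card) :
    (∀ S : Finset V₁, S.card ≤ (Finset.univ.filter (fun b => ∃ a ∈ S, r a b)).card) ∧
    (∀ S : Finset V₂, S.card ≤ (Finset.univ.filter (fun a => ∃ b ∈ S, r a b)).card) := by
  exact ⟨hall_aux r m h1 h2 hA hB, hall_aux (fun b a => r a b) m h2 h1 hB hA⟩
end

section
/- Let H = (V₁ ⊔ V₂, E) be a finite bipartite graph with |V₁| = |V₂| = m. If for every subset S ⊆ V₁ with |S| ≤ (m+1)/2 we have |Γ(S) ∩ V₂| ≥ |S|, and for every subset S ⊆ V₂ with |S| ≤ (m+1)/2 we have |Γ(S) ∩ V₁| ≥ |S|, then H has a perfect matching. -/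
theorem perfect_matching_from_half_hall_condition
    {V₁ V₂ : Type*} [Fintype V₁] [Fintype V₂] [DecidableEq V₁] [DecidableEq V₂]
    (r : V₁ → V₂ → Prop) [∀ a b, Decidable (r a b)] (m : ℕ)
    (h1 : Fintype.card V₁ = m) (h2 : Fintype.card V₂ = m)
    (hA : ∀ S : Finset V₁, 2 * S.card ≤ m + 1 →
      S.card ≤ (Finset.univ.filter (fun b => ∃ a ∈ S, r a b)).card)
    (hB : ∀ S : Finset V₂, 2 * S.card ≤ m + 1 →
      S.card ≤ (Finset.univ.filter (fun a => ∃ b ∈ S, r a b)).card) :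
    ∃ f : V₁ ≃ V₂, ∀ a : V₁, r a (f a) := by
  have hall : ∀ S : Finset V₁,
      S.card ≤ (Finset.univ.filter (fun b => ∃ a ∈ S, r a b)).card := by
    intro S
    by_cases hc : 2 * S.card ≤ m + 1
    · exact hA S hc
    · push_neg at hc
      set N := Finset.univ.filter (fun b => ∃ a ∈ S, r a b) with hN
      set T := Nᶜ with hT
      -- N.card ≥ (m+1)/2 via a subset of S
      obtain ⟨S', hS'sub, hS'card⟩ := Finset.exists_subset_card_eq
        (show (m + 1) / 2 ≤ S.card by omega)
      have hNbig : (m + 1) / 2 ≤ N.card := by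
        calc (m + 1) / 2 = S'.card := hS'card.symm
          _ ≤ (Finset.univ.filter (fun b => ∃ a ∈ S', r a b)).card := hA S' (by omega)
          _ ≤ N.card := by
              apply Finset.card_le_card
              intro b hb
              simp only [hN, Finset.mem_filter, Finset.mem_univ, true_and] at hb ⊢
              obtain ⟨a, ha, hr⟩ := hb
              exact ⟨a, hS'sub ha, hr⟩
      have hTcard : T.card = m - N.card := by
        rw [hT, Finset.card_compl, h2]
      -- neighbors of T avoid S
      have hsub : (Finset.univ.filter (fun a => ∃ b ∈ T, r a b)) ⊆ Sᶜ := by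
        intro a ha
        simp only [Finset.mem_filter, Finset.mem_univ, true_and] at ha
        obtain ⟨b, hb, hr⟩ := ha
        rw [Finset.mem_compl]
        intro haS
        rw [hT, Finset.mem_compl, hN] at hb
        exact hb (Finset.mem_filter.mpr ⟨Finset.mem_univ _, a, haS, hr⟩)
      have hNle : N.card ≤ m := by
        have := Finset.card_le_univ N; omega
      have hSle : S.card ≤ m := by
        have := Finset.card_le_univ S; omega
      have hTsmall : 2 * T.card ≤ m + 1 := by omega
      have := hB T hTsmall
      have h3 : T.card ≤ Sᶜ.card := le_trans this (Finset.card_le_card hsub)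
      have h4 : Sᶜ.card = Fintype.card V₁ - S.card := Finset.card_compl S
      omega
  obtain ⟨f, hinj, hrel⟩ := (Fintype.all_card_le_filter_rel_iff_exists_injective r).mp hall
  have hbij : Function.Bijective f :=
    (Fintype.bijective_iff_injective_and_card f).mpr ⟨hinj, by rw [h1, h2]⟩
  exact ⟨Equiv.ofBijective f hbij, hrel⟩
end

section
/- Let G be an amply regular graph with parameters (n, d, α, β), let x and y be adjacent vertices, and let v ∈ N_x. If v has exactly ℓ neighbors in N_y, then v has exactly α − β + 1 + ℓ neighbors in N_x. -/
/-!
Count the common neighbours of `v` with `x` and with `y`; there are `α` and `β` of them, since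
`v` is adjacent to `x` and at distance two from `y`. Those adjacent to both `x` and `y` are
counted in both. The remaining ones are the neighbours of `v` in `N_x` for the first count, and
`x` together with the `ℓ` neighbours of `v` in `N_y` for the second.
-/

open Finset
namespace SimpleGraph
variable {V : Type*} (G : SimpleGraph V)

lemma dist_eq_two_of_adj_of_adj {u w v : V} (huw : G.Adj u w) (hwv : G.Adj w v) (huv : u ≠ v)
    (hnadj : ¬G.Adj u v) : G.dist u v = 2 := by
  rw [dist, ENat.toNat_eq_iff two_ne_zero, Nat.cast_ofNat, edist_eq_two_iff]
  exact ⟨huv, hnadj, w, huw, hwv.symm⟩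

variable [Fintype V] [DecidableRel G.Adj]

lemma card_commonNeighbors_eq_card_filter (u w : V) :
    Fintype.card (G.commonNeighbors u w) = #{z | G.Adj u z ∧ G.Adj w z} := by
  rw [← Set.toFinset_card]
  congr 1
  ext
  simp [mem_commonNeighbors]

lemma card_commonNeighbors_eq_add (u w s : V) :
    Fintype.card (G.commonNeighbors u w) =
      #{z | G.Adj u z ∧ G.Adj w z ∧ G.Adj s z} + #{z | G.Adj u z ∧ G.Adj w z ∧ ¬G.Adj s z} := by
  rw [card_commonNeighbors_eq_card_filter,
    ← card_filter_add_card_filter_not (p := fun z ↦ G.Adj s z)]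
  simp only [filter_filter, and_assoc]

variable {G} [DecidableEq V]

lemma filter_not_adj_eq_of_not_adj {x y v : V} (hyv : ¬G.Adj y v) :
    univ.filter (fun z ↦ G.Adj x z ∧ G.Adj v z ∧ ¬G.Adj y z) =
      univ.filter (fun z ↦ (G.Adj x z ∧ ¬G.Adj y z ∧ z ≠ y) ∧ G.Adj v z) := by
  ext z
  simp only [mem_filter, mem_univ, true_and]
  exact ⟨fun ⟨hxz, hvz, hyz⟩ ↦ ⟨⟨hxz, hyz, by rintro rfl; exact hyv hvz.symm⟩, hvz⟩,
    fun ⟨⟨hxz, hyz, _⟩, hvz⟩ ↦ ⟨hxz, hvz, hyz⟩⟩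

lemma filter_not_adj_eq_insert_of_adj {x y v : V} (hxy : G.Adj x y) (hxv : G.Adj x v) :
    univ.filter (fun z ↦ G.Adj y z ∧ G.Adj v z ∧ ¬G.Adj x z) =
      insert x (univ.filter fun z ↦ (G.Adj y z ∧ ¬G.Adj x z ∧ z ≠ x) ∧ G.Adj v z) := by
  ext z
  simp only [mem_insert, mem_filter, mem_univ, true_and]
  by_cases hzx : z = x
  · subst hzx
    simp [hxy.symm, hxv.symm]
  · simp only [hzx, false_or, ne_eq, not_false_eq_true, and_true]
    tauto

end SimpleGraph

open SimpleGraph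

theorem neighbors_in_N_x_general
    {V : Type*} [Fintype V] [DecidableEq V] (G : SimpleGraph V) [DecidableRel G.Adj]
    (α β ℓ : ℕ)
    (hadj : ∀ v w : V, G.Adj v w → Fintype.card (G.commonNeighbors v w) = α)
    (hdist : ∀ v w : V, G.dist v w = 2 → Fintype.card (G.commonNeighbors v w) = β)
    (x y v : V) (hxy : G.Adj x y)
    (hv : G.Adj x v ∧ ¬ G.Adj y v ∧ v ≠ y)
    (hℓ : (Finset.univ.filter
      (fun z => (G.Adj y z ∧ ¬ G.Adj x z ∧ z ≠ x) ∧ G.Adj v z)).card = ℓ) :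
    ((Finset.univ.filter
      (fun z => (G.Adj x z ∧ ¬ G.Adj y z ∧ z ≠ y) ∧ G.Adj v z)).card : ℤ)
      = (α : ℤ) - β + 1 + ℓ := by
  obtain ⟨hxv, hyv, hvy⟩ := hv
  have hα := G.card_commonNeighbors_eq_add x v y
  rw [hadj x v hxv, filter_not_adj_eq_of_not_adj hyv] at hα
  have hβ := G.card_commonNeighbors_eq_add y v x
  rw [hdist y v (G.dist_eq_two_of_adj_of_adj hxy.symm hxv hvy.symm hyv),
    filter_not_adj_eq_insert_of_adj hxy hxv, card_insert_of_notMem (by simp), hℓ] at hβ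
  have hxyv : #{z | G.Adj y z ∧ G.Adj v z ∧ G.Adj x z} =
      #{z | G.Adj x z ∧ G.Adj v z ∧ G.Adj y z} :=
    congrArg card (filter_congr fun _ _ ↦ by tauto)
  omega

theorem neighbors_in_N_x
    {V : Type*} [Fintype V] [DecidableEq V] (G : SimpleGraph V) [DecidableRel G.Adj]
    (n d α β ℓ : ℕ)
    (hn : Fintype.card V = n)
    (hreg : G.IsRegularOfDegree d)
    (hadj : ∀ v w : V, G.Adj v w → Fintype.card (G.commonNeighbors v w) = α)
    (hdist : ∀ v w : V, G.dist v w = 2 → Fintype.card (G.commonNeighbors v w) = β)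
    (x y v : V) (hxy : G.Adj x y)
    (hv : G.Adj x v ∧ ¬ G.Adj y v ∧ v ≠ y)
    (hℓ : (Finset.univ.filter
      (fun z => (G.Adj y z ∧ ¬ G.Adj x z ∧ z ≠ x) ∧ G.Adj v z)).card = ℓ) :
    ((Finset.univ.filter
      (fun z => (G.Adj x z ∧ ¬ G.Adj y z ∧ z ≠ y) ∧ G.Adj v z)).card : ℤ)
      = (α : ℤ) - β + 1 + ℓ :=
  neighbors_in_N_x_general G α β ℓ hadj hdist x y v hxy hv hℓ
end

section
/- Let G be a strongly regular graph with parameters (n, d, α, β) with β ≥ α, and let λ₂ = 1 − ((α−β) + √((α−β)² + 4(d−β)))/(2d) be the smallest nonzero normalized Laplacian eigenvalue. If λ₂ ≤ (2 + α)/d, then d ≤ 2α − β + 4. -/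
/-!
Clearing denominators, `λ₂ ≤ (2 + α)/d` says `2d - 3α + β - 4 ≤ √((α - β)² + 4(d - β))`.
If `d > 2α - β + 4`, then `β ≤ d` forces `d > α + 2` and makes the left side positive, so squaring
gives `4 (d - α - 1) (d - 2α + β - 4) ≤ 0`, although both factors are positive.
-/

namespace SimpleGraph

variable {V : Type*} [Fintype V] {G : SimpleGraph V} [DecidableRel G.Adj] {n k ℓ μ : ℕ}

theorem IsSRGWith.mu_le_k (h : G.IsSRGWith n k ℓ μ) (hG : G ≠ ⊤) : μ ≤ k := by
  obtain ⟨v, w, hvw, hnadj⟩ := ne_top_iff_exists_not_adj.mp hG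
  simpa [h.regular v, h.of_not_adj hvw hnadj] using G.card_commonNeighbors_le_degree_left v w

end SimpleGraph

theorem le_sqrt_of_one_sub_div_le {a b d s : ℝ} (hd : 0 < d)
    (h : 1 - (a - b + s) / (2 * d) ≤ (2 + a) / d) : 2 * d - 3 * a + b - 4 ≤ s := by
  have h' := mul_le_mul_of_nonneg_right h (by positivity : (0 : ℝ) ≤ 2 * d)
  field_simp at h'
  linarith

theorem le_two_mul_sub_add_four_of_le_sqrt {a b d : ℝ} (hbd : b ≤ d)
    (h : 2 * d - 3 * a + b - 4 ≤ √((a - b) ^ 2 + 4 * (d - b))) : d ≤ 2 * a - b + 4 := by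
  by_contra! hlt
  have hsq := (Real.le_sqrt' (by linarith)).mp h
  have hfactor : (2 * d - 3 * a + b - 4) ^ 2 - ((a - b) ^ 2 + 4 * (d - b))
      = 4 * (d - a - 1) * (d - 2 * a + b - 4) := by ring
  linarith [mul_pos (show 0 < d - a - 1 by linarith) (show 0 < d - 2 * a + b - 4 by linarith)]

theorem srg_lambda2_small_implies_d_bound_general
    {V : Type*} [Fintype V] (G : SimpleGraph V) [DecidableRel G.Adj]
    (n d α β : ℕ) (hsrg : G.IsSRGWith n d α β)
    (hne_top : G ≠ ⊤)
    (hlam : 1 - (((α : ℝ) - β) + Real.sqrt (((α : ℝ) - β) ^ 2 + 4 * ((d : ℝ) - β))) / (2 * d)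
        ≤ (2 + (α : ℝ)) / d) :
    (d : ℤ) ≤ 2 * α - β + 4 := by
  -- with `x / 0 = 0`, at `d = 0` the hypothesis `hlam` reads `1 ≤ 0`
  have hd : 0 < d := Nat.pos_of_ne_zero fun h => by subst h; norm_num at hlam
  have hβd : β ≤ d := hsrg.mu_le_k hne_top
  have hreal : (d : ℝ) ≤ 2 * α - β + 4 :=
    le_two_mul_sub_add_four_of_le_sqrt (by exact_mod_cast hβd)
      (le_sqrt_of_one_sub_div_le (by exact_mod_cast hd) hlam)
  exact_mod_cast hreal

theorem srg_lambda2_small_implies_d_bound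
    {V : Type*} [Fintype V] [DecidableEq V] (G : SimpleGraph V) [DecidableRel G.Adj]
    (n d α β : ℕ) (hsrg : G.IsSRGWith n d α β)
    (hconn : G.Connected) (hne_top : G ≠ ⊤)
    (hβα : α ≤ β)
    (hlam : 1 - (((α : ℝ) - β) + Real.sqrt (((α : ℝ) - β) ^ 2 + 4 * ((d : ℝ) - β))) / (2 * d)
        ≤ (2 + (α : ℝ)) / d) :
    (d : ℤ) ≤ 2 * α - β + 4 :=
  srg_lambda2_small_implies_d_bound_general G n d α β hsrg hne_top hlam
end

section
/- Let γ ≥ 2 be an integer, and suppose real numbers X > 0, b with 2 ≤ b satisfy (2/γ + 1/(γ−1) + 1/(b−1))X² − 4bX + γ(b² − b) ≤ 0. Then b > γ − 3. -/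
/-! The left-hand side is a quadratic in `X` with positive leading coefficient `A` and constant term
`C = γ(b² - b)`, so it can be nonpositive somewhere only if its discriminant `16b² - 4AC` is
nonnegative. Since `1/(γ-1) > 1/γ`, the product `AC` exceeds `3(b² - b) + γb`, and `AC ≤ 4b²`
then gives `γ - 3 < b`. -/

theorem discrim_eq_sq_sub_mul_quadratic {R : Type*} [CommRing R] (a b c x : R) :
    discrim a b c = (2 * a * x + b) ^ 2 - 4 * a * (a * (x * x) + b * x + c) := by
  rw [discrim]; ring

theorem discrim_nonneg_of_quadratic_nonpos {R : Type*} [CommRing R] [LinearOrder R]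
    [IsStrictOrderedRing R] {a b c x : R} (ha : 0 ≤ a) (h : a * (x * x) + b * x + c ≤ 0) :
    0 ≤ discrim a b c := by
  rw [discrim_eq_sq_sub_mul_quadratic a b c x]
  have : 4 * a * (a * (x * x) + b * x + c) ≤ 0 :=
    mul_nonpos_of_nonneg_of_nonpos (by positivity) h
  nlinarith [sq_nonneg (2 * a * x + b)]

theorem three_mul_add_lt_coeff_mul {g b : ℝ} (hg : 1 < g) (hb : 1 < b) :
    3 * (b ^ 2 - b) + g * b < (2 / g + 1 / (g - 1) + 1 / (b - 1)) * (g * (b ^ 2 - b)) := by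
  have hg0 : g ≠ 0 := by positivity
  have hg1 : g - 1 ≠ 0 := sub_ne_zero.mpr hg.ne'
  have hb1 : b - 1 ≠ 0 := sub_ne_zero.mpr hb.ne'
  have hbb : 0 < b ^ 2 - b := by nlinarith
  have hgg : 1 < g / (g - 1) := by rw [one_lt_div (by linarith)]; linarith
  have expand : (2 / g + 1 / (g - 1) + 1 / (b - 1)) * (g * (b ^ 2 - b))
      = 2 * (b ^ 2 - b) + g / (g - 1) * (b ^ 2 - b) + g * b := by
    field_simp
  rw [expand]
  nlinarith

theorem conference_discriminant_bound_general
    (γ : ℤ) (hγ : 2 ≤ γ) (X b : ℝ) (hb : 2 ≤ b)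
    (h : (2 / (γ : ℝ) + 1 / ((γ : ℝ) - 1) + 1 / (b - 1)) * X ^ 2 - 4 * b * X
          + (γ : ℝ) * (b ^ 2 - b) ≤ 0) :
    (γ : ℝ) - 3 < b := by
  have hg : (1 : ℝ) < γ := by exact_mod_cast hγ
  set A := 2 / (γ : ℝ) + 1 / ((γ : ℝ) - 1) + 1 / (b - 1)
  have hA : 0 ≤ A := by
    have : (0 : ℝ) < b - 1 := by linarith
    positivity
  have hdisc := discrim_nonneg_of_quadratic_nonpos (b := -4 * b) (c := (γ : ℝ) * (b ^ 2 - b))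
    (x := X) hA (by linarith [show X ^ 2 = X * X from sq X])
  have hAC := three_mul_add_lt_coeff_mul hg (by linarith : 1 < b)
  rw [discrim] at hdisc
  have hlt : b * ((γ : ℝ) - 3) < b * b := by nlinarith
  exact lt_of_mul_lt_mul_left hlt (by linarith)

theorem conference_discriminant_bound
    (γ : ℤ) (hγ : 2 ≤ γ) (X b : ℝ) (hX : 0 < X) (hb : 2 ≤ b)
    (h : (2 / (γ : ℝ) + 1 / ((γ : ℝ) - 1) + 1 / (b - 1)) * X ^ 2 - 4 * b * X
          + (γ : ℝ) * (b ^ 2 - b) ≤ 0) :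
    (γ : ℝ) - 3 < b :=
  conference_discriminant_bound_general γ hγ X b hb h
end

section
/- Let α ≥ 1 and d, b be positive reals with b ≥ 2, d > α + 1, and d ≤ 3α + 1. If 4b ≥ 2(b−1) + (d−α−1) + (b−1)(d−α−1)/α and b ≤ (d−α)/2, then d ≤ α + √(6α + 1/4) + 3/2. -/
theorem case_one_algebraic_core
    (α d b : ℝ) (hα : 1 ≤ α) (hb : 2 ≤ b) (hd1 : α + 1 < d) (hd2 : d ≤ 3 * α + 1)
    (h4b : 2 * (b - 1) + (d - α - 1) + (b - 1) * (d - α - 1) / α ≤ 4 * b)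
    (hble : b ≤ (d - α) / 2) :
    d ≤ α + Real.sqrt (6 * α + 1 / 4) + 3 / 2 := by
  have hα0 : (0:ℝ) < α := by linarith
  have hdiv : (b - 1) * (d - α - 1) / α * α = (b - 1) * (d - α - 1) :=
    div_mul_cancel₀ _ (ne_of_gt hα0)
  have h4b' := mul_le_mul_of_nonneg_right h4b (le_of_lt hα0)
  have key : (d - α - 1) * (d - α - 2) ≤ 6 * α := by nlinarith [hdiv, h4b']
  have hnn : (0:ℝ) ≤ 6 * α + 1 / 4 := by linarith
  have hs := Real.sq_sqrt hnn
  have hs0 := Real.sqrt_nonneg (6 * α + 1 / 4)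
  nlinarith [sq_nonneg (d - α - 3/2 + Real.sqrt (6 * α + 1 / 4))]
end
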